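/- Let x and y be sequences of length m over a linearly ordered alphabet Σ. Then x ≈ y if and only if x and y have the same rank function (ρ_x = ρ_y) and, for all 0 ≤ i < m−1, x[r(i)] = x[r(i+1)] if and only if y[r(i)] = y[r(i+1)], where r = ρ_x⁻¹ (equivalently, x and y have the same equality function). -/

import Mathlib

variable {α : Type*} [LinearOrder α]

/-- β_x(i,j) = 1 if x[i] ≥ x[j], 0 otherwise. -/
def beta {m : ℕ} (x : Fin m → α) (i j : Fin m) : ℕ :=
  if x j ≤ x i then 1 else 0

/-- The rank function ρ_x. -/
def rankFn {m : ℕ} (x : Fin m → α) (i : Fin m) : ℕ :=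
  (Finset.univ.filter fun j => x j < x i ∨ (x j = x i ∧ j < i)).card

/-- Order isomorphism of two sequences of the same length. -/
def OrderIsom {m : ℕ} (x y : Fin m → α) : Prop :=
  ∀ i j : Fin m, x i ≤ x j ↔ y i ≤ y j

/-- The q-neighborhood-ranking value χ^q_x[i]. -/
def chi {m : ℕ} (x : Fin m → α) (q i : ℕ) (h : i + q < m) : ℕ :=
  ∑ j : Fin q, beta x ⟨i, by omega⟩ ⟨i + (j.val + 1), by have := j.isLt; omega⟩ *
    2 ^ (q - (j.val + 1))

/-- The q-neighborhood-ordering value φ^q_x[i]. -/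
def phi {m : ℕ} (x : Fin m → α) (q i : ℕ) (h : i + q < m) : ℕ :=
  ∑ k : Fin q, chi x (k.val + 1) (i + q - (k.val + 1)) (by have := k.isLt; omega) *
    2 ^ ((k.val + 1) * k.val / 2)

/-!
Ranks and equalities are defined from comparisons, which `x ≈ y` preserves. Conversely, since `ρ_x (r i) = i`, both `x ∘ r` and `y ∘ r` (using `ρ_y = ρ_x`) are monotone.
For a monotone sequence, `f i = f j` with `i ≤ j` holds exactly when all consecutive values
between `i` and `j` are equal, so the equality functions determine every comparison.
-/

theorem Monotone.eq_iff_eq_and_eq {β γ : Type*} [Preorder β] [PartialOrder γ] {f : β → γ}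
    (hf : Monotone f) {a b c : β} (hab : a ≤ b) (hbc : b ≤ c) :
    f a = f c ↔ f a = f b ∧ f b = f c := by
  refine ⟨fun hac => ?_, fun h => h.1.trans h.2⟩
  have hfab : f a = f b := le_antisymm (hf hab) (hac ▸ hf hbc)
  exact ⟨hfab, hfab ▸ hac⟩

section Sequences

variable {m : ℕ}

theorem Monotone.eq_iff_eq_of_succ_eq_iff {f g : Fin m → α} (hf : Monotone f) (hg : Monotone g)
    (hsucc : ∀ k (hk : k + 1 < m),
      f ⟨k, k.lt_of_succ_lt hk⟩ = f ⟨k + 1, hk⟩ ↔ g ⟨k, k.lt_of_succ_lt hk⟩ = g ⟨k + 1, hk⟩)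
    {i j : Fin m} (hij : i ≤ j) : f i = f j ↔ g i = g j := by
  obtain ⟨n, hn⟩ := j
  replace hij : i.val ≤ n := hij
  induction n, hij using Nat.le_induction with
  | base => simp
  | succ n hin ih =>
    have hn' : n < m := by omega
    have hi_le : i ≤ ⟨n, hn'⟩ := Fin.le_def.mpr hin
    have hn_le : (⟨n, hn'⟩ : Fin m) ≤ ⟨n + 1, hn⟩ := Fin.le_def.mpr (by simp)
    rw [hf.eq_iff_eq_and_eq hi_le hn_le, hg.eq_iff_eq_and_eq hi_le hn_le]
    exact and_congr (ih hn') (hsucc n hn)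

theorem Monotone.le_iff_le_of_succ_eq_iff {f g : Fin m → α} (hf : Monotone f) (hg : Monotone g)
    (hsucc : ∀ k (hk : k + 1 < m),
      f ⟨k, k.lt_of_succ_lt hk⟩ = f ⟨k + 1, hk⟩ ↔ g ⟨k, k.lt_of_succ_lt hk⟩ = g ⟨k + 1, hk⟩)
    (i j : Fin m) : f i ≤ f j ↔ g i ≤ g j := by
  rcases le_total i j with hij | hji
  · exact iff_of_true (hf hij) (hg hij)
  · rw [(hf hji).ge_iff_eq, (hg hji).ge_iff_eq]
    exact hf.eq_iff_eq_of_succ_eq_iff hg hsucc hji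

theorem rankFn_lt_rankFn_of_lt (x : Fin m → α) {a b : Fin m} (h : x a < x b) :
    rankFn x a < rankFn x b := by
  apply Finset.card_lt_card
  refine (Finset.ssubset_iff_of_subset fun j hj => ?_).mpr ⟨a, by simp [h], by simp⟩
  simp only [Finset.mem_filter, Finset.mem_univ, true_and] at hj ⊢
  rcases hj with hja | ⟨hja, -⟩
  · exact Or.inl (hja.trans h)
  · exact Or.inl (hja ▸ h)

theorem le_of_rankFn_le (x : Fin m → α) {a b : Fin m} (h : rankFn x a ≤ rankFn x b) :
    x a ≤ x b :=
  le_of_not_gt fun hba => (rankFn_lt_rankFn_of_lt x hba).not_ge h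

theorem monotone_comp_of_rankFn_comp_eq {x : Fin m → α} {r : Fin m → Fin m}
    (hr : ∀ i, rankFn x (r i) = i.val) : Monotone (x ∘ r) := fun i j hij =>
  le_of_rankFn_le x (by rw [hr, hr]; exact hij)

namespace OrderIsom

variable {x y : Fin m → α}

theorem lt_iff (h : OrderIsom x y) (i j : Fin m) : x i < x j ↔ y i < y j := by
  rw [← not_le, ← not_le, h j i]

theorem eq_iff (h : OrderIsom x y) (i j : Fin m) : x i = x j ↔ y i = y j := by
  rw [le_antisymm_iff, le_antisymm_iff, h i j, h j i]

theorem rankFn_eq (h : OrderIsom x y) : rankFn x = rankFn y := by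
  funext i
  unfold rankFn
  congr 1
  exact Finset.filter_congr fun j _ => by rw [h.lt_iff, h.eq_iff]

end OrderIsom

end Sequences

/-- `x ≈ y` iff `x` and `y` share the same rank function and the same equality function
(consecutive equalities along the inverse rank permutation `r` of `x` agree). -/
theorem orderIsom_iff_rankFn_eq_and_eqFn_eq {m : ℕ} (x y : Fin m → α)
    (r : Fin m → Fin m) (hr : ∀ i : Fin m, rankFn x (r i) = i.val) :
    OrderIsom x y ↔
      (rankFn x = rankFn y ∧
       ∀ i : ℕ, ∀ h : i + 1 < m,
          (x (r ⟨i, by omega⟩) = x (r ⟨i + 1, h⟩) ↔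
           y (r ⟨i, by omega⟩) = y (r ⟨i + 1, h⟩))) := by
  refine ⟨fun hiso => ⟨hiso.rankFn_eq, fun i h => hiso.eq_iff _ _⟩, ?_⟩
  rintro ⟨hrank, hsucc⟩ a b
  have hr_surj : Function.Surjective r :=
    Finite.surjective_of_injective fun i j hij => Fin.ext (by rw [← hr i, ← hr j, hij])
  have hmono_x := monotone_comp_of_rankFn_comp_eq hr
  have hmono_y := monotone_comp_of_rankFn_comp_eq (hrank ▸ hr)
  obtain ⟨i, rfl⟩ := hr_surj a
  obtain ⟨j, rfl⟩ := hr_surj b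
  exact hmono_x.le_iff_le_of_succ_eq_iff hmono_y hsucc i j
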